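/- arXiv:1612.05903 — 4 statements merged into one kernel-verified Lean document; each statement's English description precedes it below -/
import Mathlib

section
/- Let N be a positive even integer and let a_1 ≤ a_2 ≤ … ≤ a_N be real numbers satisfying ∑_{i=1}^N a_i = 0 and ∑_{i=1}^N |a_i| = Δ. Then ∑_{i=N/2+1}^{N} a_i ≥ Δ/4. -/
/-- Sorted reals summing to 0 with total absolute value Δ: the top half sums to ≥ Δ/4. -/
theorem stmt_0 (N : ℕ) (hN : 0 < N) (hEven : Even N) (a : ℕ → ℝ) (Δ : ℝ)
    (hsorted : ∀ i j, i ≤ j → j < N → a i ≤ a j)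
    (hsum : ∑ i ∈ Finset.range N, a i = 0)
    (habs : ∑ i ∈ Finset.range N, |a i| = Δ) :
    ∑ i ∈ Finset.Ico (N / 2) N, a i ≥ Δ / 4 := by
  obtain ⟨n, hn⟩ := hEven
  subst hn
  have hn0 : 0 < n := by omega
  have hhalf : (n + n) / 2 = n := by omega
  rw [hhalf]
  have hsplit : ∀ f : ℕ → ℝ, ∑ i ∈ Finset.range (n + n), f i
      = ∑ i ∈ Finset.range n, f i + ∑ i ∈ Finset.Ico n (n + n), f i := by
    intro f
    rw [Finset.range_eq_Ico, ← Finset.sum_Ico_consecutive _ (Nat.zero_le n) (by omega), Finset.range_eq_Ico]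
  have hre : ∀ f : ℕ → ℝ, ∑ i ∈ Finset.Ico n (n + n), f i
      = ∑ i ∈ Finset.range n, f (n + i) := by
    intro f
    rw [Finset.sum_Ico_eq_sum_range]
    simp
  set Sb := ∑ i ∈ Finset.range n, a i with hSb
  set St := ∑ i ∈ Finset.Ico n (n + n), a i with hSt
  have hzero : Sb + St = 0 := by rw [hSb, hSt, ← hsplit]; exact hsum
  set PB := ∑ i ∈ Finset.range n, max (a i) 0 with hPB
  set PT := ∑ i ∈ Finset.Ico n (n + n), max (a i) 0 with hPT
  set MB := ∑ i ∈ Finset.range n, max (-a i) 0 with hMB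
  set MT := ∑ i ∈ Finset.Ico n (n + n), max (-a i) 0 with hMT
  have habs_eq : ∀ x : ℝ, |x| = max x 0 + max (-x) 0 := by
    intro x
    rcases le_total 0 x with h | h
    · rw [abs_of_nonneg h, max_eq_left h, max_eq_right (by linarith), add_zero]
    · rw [abs_of_nonpos h, max_eq_right h, max_eq_left (by linarith), zero_add]
  have hval_eq : ∀ x : ℝ, x = max x 0 - max (-x) 0 := by
    intro x
    rcases le_total 0 x with h | h
    · rw [max_eq_left h, max_eq_right (by linarith), sub_zero]
    · rw [max_eq_right h, max_eq_left (by linarith), zero_sub, neg_neg]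
  have hΔ : Δ = PB + MB + (PT + MT) := by
    rw [← habs, hsplit, hPB, hMB, hPT, hMT, ← Finset.sum_add_distrib, ← Finset.sum_add_distrib]
    congr 1 <;> exact Finset.sum_congr rfl fun i _ => habs_eq (a i)
  have hSbeq : Sb = PB - MB := by
    rw [hSb, hPB, hMB, ← Finset.sum_sub_distrib]
    exact Finset.sum_congr rfl fun i _ => hval_eq (a i)
  have hSteq : St = PT - MT := by
    rw [hSt, hPT, hMT, ← Finset.sum_sub_distrib]
    exact Finset.sum_congr rfl fun i _ => hval_eq (a i)
  rcases le_total 0 (a n) with hcase | hcase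
  · -- top half nonneg
    have hMT0 : MT = 0 := by
      rw [hMT]
      refine Finset.sum_eq_zero fun i hi => ?_
      rw [Finset.mem_Ico] at hi
      have : 0 ≤ a i := le_trans hcase (hsorted n i hi.1 hi.2)
      exact max_eq_right (by linarith)
    have hPBle : PB ≤ PT := by
      rw [hPB, hPT, hre]
      refine Finset.sum_le_sum fun i hi => ?_
      rw [Finset.mem_range] at hi
      exact max_le_max (hsorted i (n + i) (by omega) (by omega)) le_rfl
    linarith
  · -- bottom half nonpos
    have hPB0 : PB = 0 := by
      rw [hPB]
      refine Finset.sum_eq_zero fun i hi => ?_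
      rw [Finset.mem_range] at hi
      have : a i ≤ 0 := le_trans (hsorted i n (by omega) (by omega)) hcase
      exact max_eq_right (by linarith)
    have hMTle : MT ≤ MB := by
      rw [hMB, hMT, hre]
      refine Finset.sum_le_sum fun i hi => ?_
      rw [Finset.mem_range] at hi
      exact max_le_max (neg_le_neg (hsorted i (n + i) (by omega) (by omega))) le_rfl
    linarith
end

section
/- Let |u⟩ be a pure quantum state on n qubits, i.e., a unit vector u ∈ ℂ^{2^n}. Define dev(u) = ∑_{w ∈ {0,1}^n} | |⟨u|w⟩|^2 − 2^{−n} | and adv(u) = ∑ of the largest 2^{n−1} values among { |⟨u|w⟩|^2 : w ∈ {0,1}^n }. Then adv(u) ≥ 1/2 + dev(u)/4. -/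
open Finset

lemma sum_le_sum_of_dom {α : Type*} [DecidableEq α] (S T : Finset α) (f : α → ℝ)
    (h : S.card = T.card) (hle : ∀ a ∈ S, ∀ b ∈ T, f b ≤ f a) :
    ∑ b ∈ T, f b ≤ ∑ a ∈ S, f a := by
  have hcard : Fintype.card ↥S = Fintype.card ↥T := by
    simp [Fintype.card_coe, h]
  let e : ↥S ≃ ↥T := Fintype.equivOfCardEq hcard
  have h1 : ∑ b ∈ T, f b = ∑ y : ↥S, f (e y) := by
    rw [Equiv.sum_comp e (fun x : ↥T => f x)]
    exact (Finset.sum_coe_sort T f).symm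
  rw [h1, ← Finset.sum_coe_sort S f]
  apply Finset.sum_le_sum
  intro y _
  exact hle y y.2 (e y) (e y).2

/-- Lemma dev-to-adv: for a pure state u on n qubits, the probability mass on the
top half (the 2^(n-1) largest output probabilities) is at least 1/2 + dev(u)/4,
where dev(u) is the ℓ1 distance of the output distribution from uniform. -/
theorem stmt_1 (n : ℕ) (hn : 1 ≤ n) (u : (Fin n → Bool) → ℂ)
    (hunit : ∑ w : Fin n → Bool, ‖u w‖ ^ 2 = 1)
    (S : Finset (Fin n → Bool)) (hcard : S.card = 2 ^ (n - 1))
    (htop : ∀ w ∈ S, ∀ w' ∉ S, ‖u w'‖ ^ 2 ≤ ‖u w‖ ^ 2) :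
    ∑ w ∈ S, ‖u w‖ ^ 2 ≥
      1 / 2 + (∑ w : Fin n → Bool, |‖u w‖ ^ 2 - ((2 : ℝ) ^ n)⁻¹|) / 4 := by
  classical
  set p : (Fin n → Bool) → ℝ := fun w => ‖u w‖ ^ 2 with hp
  set c : ℝ := ((2 : ℝ) ^ n)⁻¹ with hc
  set g : (Fin n → Bool) → ℝ := fun w => p w - c with hg
  have h2 : (2 : ℝ) ^ n = 2 ^ (n - 1) * 2 := by
    rw [← pow_succ]; congr 1; omega
  have hcard_univ : (Finset.univ : Finset (Fin n → Bool)).card = 2 ^ n := by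
    simp [Finset.card_univ, Fintype.card_fun]
  have hSc : Sᶜ.card = 2 ^ (n - 1) := by
    rw [Finset.card_compl]
    have hft : Fintype.card (Fin n → Bool) = 2 ^ n := by simp [Fintype.card_fun]
    rw [hft, hcard]
    have h2n : 2 ^ n = 2 ^ (n - 1) * 2 := by rw [← pow_succ]; congr 1; omega
    omega
  -- sum of constant c over S is 1/2
  have hsumcS : ∑ _w ∈ S, c = 1 / 2 := by
    rw [Finset.sum_const, hcard, nsmul_eq_mul, hc, h2]
    push_cast
    rw [mul_inv]
    have : ((2 : ℝ) ^ (n - 1)) ≠ 0 := by positivity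
    field_simp
  have hsumcU : ∑ _w : Fin n → Bool, c = 1 := by
    rw [Finset.sum_const, hcard_univ, nsmul_eq_mul, hc]
    push_cast
    have : ((2 : ℝ) ^ n) ≠ 0 := by positivity
    field_simp
  -- total sum of g is 0
  have hgzero : ∑ w : Fin n → Bool, g w = 0 := by
    simp only [hg, Finset.sum_sub_distrib, hp]
    rw [hunit, hsumcU]; ring
  -- the four quantities
  set P1 : ℝ := ∑ w ∈ S, max (g w) 0 with hP1
  set N1 : ℝ := ∑ w ∈ S, max (-g w) 0 with hN1
  set P2 : ℝ := ∑ w ∈ Sᶜ, max (g w) 0 with hP2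
  set N2 : ℝ := ∑ w ∈ Sᶜ, max (-g w) 0 with hN2
  have hP1nn : 0 ≤ P1 := Finset.sum_nonneg fun w _ => le_max_right _ _
  have hN1nn : 0 ≤ N1 := Finset.sum_nonneg fun w _ => le_max_right _ _
  have hP2nn : 0 ≤ P2 := Finset.sum_nonneg fun w _ => le_max_right _ _
  have hN2nn : 0 ≤ N2 := Finset.sum_nonneg fun w _ => le_max_right _ _
  -- g-sum over S in terms of P1, N1
  have hgS : ∑ w ∈ S, g w = P1 - N1 := by
    rw [hP1, hN1, ← Finset.sum_sub_distrib]
    exact Finset.sum_congr rfl fun w _ => (max_zero_sub_max_neg_zero_eq_self (g w)).symm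
  have hgSc : ∑ w ∈ Sᶜ, g w = P2 - N2 := by
    rw [hP2, hN2, ← Finset.sum_sub_distrib]
    exact Finset.sum_congr rfl fun w _ => (max_zero_sub_max_neg_zero_eq_self (g w)).symm
  have hsplit : ∑ w ∈ S, g w + ∑ w ∈ Sᶜ, g w = 0 := by
    rw [Finset.sum_add_sum_compl]; exact hgzero
  have hzero : (P1 - N1) + (P2 - N2) = 0 := by rw [← hgS, ← hgSc]; exact hsplit
  -- dev expression
  have hdev : ∑ w : Fin n → Bool, |g w| = P1 + N1 + P2 + N2 := by
    have habs : ∀ w, |g w| = max (g w) 0 + max (-g w) 0 := fun w =>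
      (max_zero_add_max_neg_zero_eq_abs_self (g w)).symm
    rw [← Finset.sum_add_sum_compl S (fun w => |g w|)]
    simp only [habs, Finset.sum_add_distrib, ← hP1, ← hN1, ← hP2, ← hN2]
    ring
  -- dominance comparisons
  have hcards : S.card = Sᶜ.card := by rw [hcard, hSc]
  have hdom : ∀ a ∈ S, ∀ b ∈ Sᶜ, g b ≤ g a := by
    intro a ha b hb
    have := htop a ha b (Finset.mem_compl.mp hb)
    simp only [hg, hp]
    linarith
  have hP2le : P2 ≤ P1 :=
    sum_le_sum_of_dom S Sᶜ (fun w => max (g w) 0) hcards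
      (fun a ha b hb => max_le_max (hdom a ha b hb) le_rfl)
  have hN1le : N1 ≤ N2 :=
    sum_le_sum_of_dom Sᶜ S (fun w => max (-g w) 0) hcards.symm
      (fun b hb a ha => max_le_max (neg_le_neg (hdom a ha b hb)) le_rfl)
  -- mutual exclusivity
  have hcase : N1 = 0 ∨ P2 = 0 := by
    by_cases hall : ∀ w ∈ S, 0 ≤ g w
    · left
      apply Finset.sum_eq_zero
      intro w hw
      have := hall w hw
      rw [max_eq_right (by linarith)]
    · right
      push_neg at hall
      obtain ⟨w, hwS, hw⟩ := hall
      apply Finset.sum_eq_zero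
      intro w' hw'
      have h1 : g w' ≤ g w := hdom w hwS w' hw'
      rw [max_eq_right (by linarith)]
  -- rewrite the goal
  have hgoal : ∑ w ∈ S, p w = (P1 - N1) + 1 / 2 := by
    have : ∑ w ∈ S, p w = ∑ w ∈ S, g w + ∑ _w ∈ S, c := by
      rw [← Finset.sum_add_distrib]
      exact Finset.sum_congr rfl fun w _ => by simp [hg]
    rw [this, hgS, hsumcS]
  show ∑ w ∈ S, p w ≥ 1 / 2 + (∑ w : Fin n → Bool, |p w - c|) / 4
  have : (∑ w : Fin n → Bool, |p w - c|) = P1 + N1 + P2 + N2 := hdev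
  rw [hgoal, this]
  rcases hcase with h | h <;> linarith
end

section
/- Let x_1, x_2, x_3, x_4 be independent standard Gaussian random variables. Then E[ |x_1^2 + x_2^2 − x_3^2 − x_4^2| / (x_1^2 + x_2^2 + x_3^2 + x_4^2) ] = 1/2. -/
open MeasureTheory ProbabilityTheory Set Real Filter
open scoped ENNReal NNReal

noncomputable section AUX

/-! ### Auxiliary definitions -/

def psi (A B : ℝ) : ℝ := |A - B| / (A + B)

def dens (x : ℝ) : ℝ := (√(2 * π))⁻¹ * rexp (-x ^ 2 / 2)

def dd (p : ℝ × ℝ) : ℝ := dens p.1 * dens p.2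

def e2 (r : ℝ) : ℝ := (2 * π)⁻¹ * rexp (-r ^ 2 / 2)

def F2 (p : ℝ × ℝ) : ℝ := p.1 ^ 2 + p.2 ^ 2

def h2 (r w : ℝ) : ℝ := r ^ 3 * (w * psi 1 (w ^ 2)) * rexp (-((1 + w ^ 2) / 2) * r ^ 2)

/-! ### Elementary facts -/

lemma psi_nonneg {A B : ℝ} (h : 0 ≤ A + B) : 0 ≤ psi A B := div_nonneg (abs_nonneg _) h

lemma psi_le_one {A B : ℝ} (hA : 0 ≤ A) (hB : 0 ≤ B) : psi A B ≤ 1 := by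
  unfold psi
  rcases eq_or_lt_of_le (add_nonneg hA hB) with h | h
  · simp [← h]
  · rw [div_le_one h]
    calc |A - B| ≤ |A| + |B| := abs_sub A B
    _ = A + B := by rw [abs_of_nonneg hA, abs_of_nonneg hB]

lemma psi_smul {a : ℝ} (ha : 0 < a) (A B : ℝ) : psi (a * A) (a * B) = psi A B := by
  unfold psi
  rw [← mul_sub, ← mul_add, abs_mul, abs_of_pos ha, mul_div_mul_left _ _ (ne_of_gt ha)]

lemma dens_eq (x : ℝ) : gaussianPDFReal 0 1 x = dens x := by simp [gaussianPDFReal, dens]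

lemma dens_nonneg (x : ℝ) : 0 ≤ dens x := by unfold dens; positivity

lemma continuous_dens : Continuous dens := by unfold dens; fun_prop

lemma coe_toNNReal_dens (x : ℝ) : ((dens x).toNNReal : ℝ) = dens x :=
  Real.coe_toNNReal _ (dens_nonneg x)

lemma integrable_dens : Integrable dens := by
  unfold dens
  refine Integrable.const_mul ?_ _
  have := integrable_exp_neg_mul_sq (b := (1:ℝ)/2) (by norm_num)
  convert this using 2 with x
  ring_nf

lemma dd_nonneg (p : ℝ × ℝ) : 0 ≤ dd p := mul_nonneg (dens_nonneg _) (dens_nonneg _)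

lemma F2_nonneg (p : ℝ × ℝ) : 0 ≤ F2 p := by unfold F2; positivity

lemma dd_polar (p : ℝ × ℝ) : dd (polarCoord.symm p) = e2 p.1 := by
  have h1 : polarCoord.symm p = (p.1 * cos p.2, p.1 * sin p.2) := rfl
  have hsq : Real.sqrt (2 * π) ^ 2 = 2 * π := Real.sq_sqrt (by positivity)
  unfold dd dens e2
  rw [h1]
  simp only
  rw [show (√(2 * π))⁻¹ * rexp (-(p.1 * cos p.2) ^ 2 / 2) *
        ((√(2 * π))⁻¹ * rexp (-(p.1 * sin p.2) ^ 2 / 2))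
      = (√(2 * π))⁻¹ * (√(2 * π))⁻¹ *
        (rexp (-(p.1 * cos p.2) ^ 2 / 2) * rexp (-(p.1 * sin p.2) ^ 2 / 2)) by ring,
    ← Real.exp_add, ← mul_inv, ← sq, hsq]
  congr 2
  nlinarith [sin_sq_add_cos_sq p.2]

lemma F2_polar (p : ℝ × ℝ) : F2 (polarCoord.symm p) = p.1 ^ 2 := by
  have h1 : polarCoord.symm p = (p.1 * cos p.2, p.1 * sin p.2) := rfl
  unfold F2
  rw [h1]
  simp only
  nlinarith [sin_sq_add_cos_sq p.2]

/-! ### Product of withDensity measures -/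

lemma prod_wd {α β : Type*} [MeasurableSpace α] [MeasurableSpace β]
    (μ : Measure α) (ν : Measure β) [SigmaFinite μ] [SigmaFinite ν]
    {f : α → ℝ≥0∞} {g : β → ℝ≥0∞} (hf : Measurable f) (hg : Measurable g)
    [SigmaFinite (μ.withDensity f)] [SigmaFinite (ν.withDensity g)] :
    (μ.withDensity f).prod (ν.withDensity g) =
      (μ.prod ν).withDensity (fun p => f p.1 * g p.2) := by
  refine ((Measure.prod_eq (μ := μ.withDensity f) (ν := ν.withDensity g)
    (μν := (μ.prod ν).withDensity (fun p => f p.1 * g p.2)) fun s t hs ht => ?_))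
  rw [withDensity_apply _ (hs.prod ht), ← Measure.prod_restrict,
    lintegral_prod_mul (hf.aemeasurable) (hg.aemeasurable),
    withDensity_apply _ hs, withDensity_apply _ ht]

/-! ### The measurable equivalence (Fin 4 → ℝ) ≃ (ℝ×ℝ)×(ℝ×ℝ) -/

def ee : (Fin 4 → ℝ) ≃ᵐ (ℝ × ℝ) × (ℝ × ℝ) :=
  ((MeasurableEquiv.piCongrLeft (fun _ => ℝ) finSumFinEquiv).symm.trans
    (MeasurableEquiv.sumPiEquivProdPi (fun _ : Fin 2 ⊕ Fin 2 => ℝ))).trans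
    (MeasurableEquiv.prodCongr MeasurableEquiv.finTwoArrow MeasurableEquiv.finTwoArrow)

lemma ee_mp : MeasurePreserving ee
    (Measure.pi fun _ : Fin 4 => gaussianReal 0 1)
    (((gaussianReal 0 1).prod (gaussianReal 0 1)).prod
      ((gaussianReal 0 1).prod (gaussianReal 0 1))) := by
  simp only [ee, MeasurableEquiv.coe_trans]
  exact (((measurePreserving_finTwoArrow _).prod (measurePreserving_finTwoArrow _)).comp
    ((measurePreserving_sumPiEquivProdPi _).comp
      (measurePreserving_piCongrLeft (fun _ => gaussianReal 0 1) finSumFinEquiv).symm))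

def rho4 (q : (ℝ × ℝ) × (ℝ × ℝ)) : ℝ≥0 :=
  ((dens q.1.1).toNNReal * (dens q.1.2).toNNReal) *
    ((dens q.2.1).toNNReal * (dens q.2.2).toNNReal)

/-! ### Step 1 : reduction to a volume integral on (ℝ×ℝ)×(ℝ×ℝ) -/

lemma step1 :
    (∫ x : Fin 4 → ℝ,
        |x 0 ^ 2 + x 1 ^ 2 - x 2 ^ 2 - x 3 ^ 2| / (x 0 ^ 2 + x 1 ^ 2 + x 2 ^ 2 + x 3 ^ 2)
        ∂(Measure.pi fun _ : Fin 4 => gaussianReal 0 1)) =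
    ∫ q : (ℝ × ℝ) × (ℝ × ℝ), psi (F2 q.1) (F2 q.2) * (dd q.1 * dd q.2)
        ∂((volume : Measure (ℝ × ℝ)).prod (volume : Measure (ℝ × ℝ))) := by
  have hγ : gaussianReal 0 1 = volume.withDensity (gaussianPDF 0 1) :=
    gaussianReal_of_var_ne_zero 0 one_ne_zero
  have sf : SigmaFinite (volume.withDensity (gaussianPDF 0 1)) := by
    rw [← hγ]; infer_instance
  have hmeas : Measurable (gaussianPDF 0 1) := measurable_gaussianPDF 0 1
  have level1 : (gaussianReal 0 1).prod (gaussianReal 0 1) =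
      ((volume : Measure ℝ).prod volume).withDensity
        (fun p => gaussianPDF 0 1 p.1 * gaussianPDF 0 1 p.2) := by
    rw [hγ]
    exact prod_wd _ _ hmeas hmeas
  have hmeas2 : Measurable (fun p : ℝ × ℝ => gaussianPDF 0 1 p.1 * gaussianPDF 0 1 p.2) :=
    (hmeas.comp measurable_fst).mul (hmeas.comp measurable_snd)
  have sf2 : SigmaFinite (((volume : Measure ℝ).prod volume).withDensity
      (fun p => gaussianPDF 0 1 p.1 * gaussianPDF 0 1 p.2)) := by
    rw [← level1]; infer_instance
  have level2 : ((gaussianReal 0 1).prod (gaussianReal 0 1)).prod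
      ((gaussianReal 0 1).prod (gaussianReal 0 1)) =
      (((volume : Measure ℝ).prod volume).prod ((volume : Measure ℝ).prod volume)).withDensity
        (fun q => (gaussianPDF 0 1 q.1.1 * gaussianPDF 0 1 q.1.2) *
          (gaussianPDF 0 1 q.2.1 * gaussianPDF 0 1 q.2.2)) := by
    rw [level1]
    exact prod_wd _ _ hmeas2 hmeas2
  rw [← (MeasurePreserving.symm ee ee_mp).integral_comp']
  have hcoord : ∀ q : (ℝ × ℝ) × (ℝ × ℝ),
      (|ee.symm q 0 ^ 2 + ee.symm q 1 ^ 2 - ee.symm q 2 ^ 2 - ee.symm q 3 ^ 2| /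
        (ee.symm q 0 ^ 2 + ee.symm q 1 ^ 2 + ee.symm q 2 ^ 2 + ee.symm q 3 ^ 2)) =
      psi (F2 q.1) (F2 q.2) := by
    intro q
    have h0 : ee.symm q 0 = q.1.1 := rfl
    have h1 : ee.symm q 1 = q.1.2 := rfl
    have h2 : ee.symm q 2 = q.2.1 := rfl
    have h3 : ee.symm q 3 = q.2.2 := rfl
    rw [h0, h1, h2, h3]
    unfold psi F2
    congr 1 <;> ring
  simp only [hcoord]
  rw [level2]
  have hrho : Measurable rho4 := by
    have hd : Measurable dens := continuous_dens.measurable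
    exact (((hd.comp (measurable_fst.comp measurable_fst)).real_toNNReal).mul
      ((hd.comp (measurable_snd.comp measurable_fst)).real_toNNReal)).mul
      ((((hd.comp (measurable_fst.comp measurable_snd)).real_toNNReal)).mul
      ((hd.comp (measurable_snd.comp measurable_snd)).real_toNNReal))
  have hwd : (fun q : (ℝ × ℝ) × (ℝ × ℝ) => (gaussianPDF 0 1 q.1.1 * gaussianPDF 0 1 q.1.2) *
      (gaussianPDF 0 1 q.2.1 * gaussianPDF 0 1 q.2.2)) = fun q => (rho4 q : ℝ≥0∞) := by
    funext q
    simp only [gaussianPDF, rho4, dens_eq, ENNReal.ofReal, ENNReal.coe_mul]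
  rw [hwd, integral_withDensity_eq_integral_smul hrho]
  congr 1 with q
  unfold rho4 dd
  simp only [NNReal.smul_def, NNReal.coe_mul, coe_toNNReal_dens, smul_eq_mul]
  ring

/-! ### Integrability on the product space -/

lemma measurable_psiF2 : Measurable (fun q : (ℝ × ℝ) × (ℝ × ℝ) => psi (F2 q.1) (F2 q.2)) := by
  have hF2 : Measurable F2 := by unfold F2; fun_prop
  unfold psi
  exact (((hF2.comp measurable_fst).sub (hF2.comp measurable_snd)).abs).div
    ((hF2.comp measurable_fst).add (hF2.comp measurable_snd))

lemma integrable_dd : Integrable dd ((volume : Measure ℝ).prod (volume : Measure ℝ)) :=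
  integrable_dens.mul_prod integrable_dens

lemma integrable_H : Integrable (fun q : (ℝ × ℝ) × (ℝ × ℝ) =>
    psi (F2 q.1) (F2 q.2) * (dd q.1 * dd q.2))
    ((volume : Measure (ℝ × ℝ)).prod (volume : Measure (ℝ × ℝ))) := by
  have hDD : Integrable (fun q : (ℝ × ℝ) × (ℝ × ℝ) => dd q.1 * dd q.2)
      ((volume : Measure (ℝ × ℝ)).prod (volume : Measure (ℝ × ℝ))) := by
    have h1 : Integrable dd (volume : Measure (ℝ × ℝ)) := by
      rw [MeasureTheory.Measure.volume_eq_prod]; exact integrable_dd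
    exact h1.mul_prod h1
  refine hDD.mono ?_ (ae_of_all _ fun q => ?_)
  · exact (measurable_psiF2.mul ((continuous_dens.comp continuous_fst).measurable.mul
      (continuous_dens.comp continuous_snd).measurable |>.comp measurable_fst |>.mul
      (((continuous_dens.comp continuous_fst).measurable.mul
      (continuous_dens.comp continuous_snd).measurable).comp measurable_snd))).aestronglyMeasurable
  · have h1 : 0 ≤ psi (F2 q.1) (F2 q.2) := psi_nonneg (add_nonneg (F2_nonneg _) (F2_nonneg _))
    have h2 : psi (F2 q.1) (F2 q.2) ≤ 1 := psi_le_one (F2_nonneg _) (F2_nonneg _)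
    rw [norm_mul]
    calc ‖psi (F2 q.1) (F2 q.2)‖ * ‖dd q.1 * dd q.2‖
        ≤ 1 * ‖dd q.1 * dd q.2‖ := by
          apply mul_le_mul_of_nonneg_right _ (norm_nonneg _)
          rw [Real.norm_eq_abs, abs_of_nonneg h1]; exact h2
      _ = ‖dd q.1 * dd q.2‖ := one_mul _

/-! ### Angle elimination -/

lemma angle (G : ℝ → ℝ) :
    (∫ p in polarCoord.target, p.1 • G p.1) = (2 * π) * ∫ r in Ioi (0:ℝ), r * G r := by
  have ht : polarCoord.target = Ioi (0:ℝ) ×ˢ Ioo (-π) π := rfl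
  rw [ht, MeasureTheory.Measure.volume_eq_prod, ← Measure.prod_restrict]
  have h := integral_prod_mul (L := ℝ) (μ := volume.restrict (Ioi (0:ℝ)))
    (ν := volume.restrict (Ioo (-π) π)) (f := fun r => r * G r) (g := fun _ => (1:ℝ))
  simp only [mul_one] at h
  rw [show (fun p : ℝ × ℝ => p.1 • G p.1) = fun p : ℝ × ℝ => p.1 * G p.1 from rfl]
  rw [h]
  rw [integral_const]
  simp [Real.volume_Ioo]
  rw [max_eq_left (by positivity)]
  ring

/-! ### Step 2 : polar coordinates -/

lemma step2 :
    (∫ q : (ℝ × ℝ) × (ℝ × ℝ), psi (F2 q.1) (F2 q.2) * (dd q.1 * dd q.2)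
        ∂((volume : Measure (ℝ × ℝ)).prod (volume : Measure (ℝ × ℝ)))) =
    ∫ r in Ioi (0:ℝ), r * rexp (-r ^ 2 / 2) *
      ∫ s in Ioi (0:ℝ), s * rexp (-s ^ 2 / 2) * psi (r ^ 2) (s ^ 2) := by
  rw [integral_prod _ integrable_H]
  have inner : ∀ q1 : ℝ × ℝ, (∫ q2 : ℝ × ℝ, psi (F2 q1) (F2 q2) * (dd q1 * dd q2)) =
      (2 * π) * ∫ s in Ioi (0:ℝ), s * (psi (F2 q1) (s ^ 2) * (dd q1 * e2 s)) := by
    intro q1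
    rw [← integral_comp_polarCoord_symm (fun q2 => psi (F2 q1) (F2 q2) * (dd q1 * dd q2))]
    simp_rw [F2_polar, dd_polar]
    exact angle (fun s => psi (F2 q1) (s ^ 2) * (dd q1 * e2 s))
  simp_rw [inner]
  rw [← integral_comp_polarCoord_symm
    (fun q1 => (2 * π) * ∫ s in Ioi (0:ℝ), s * (psi (F2 q1) (s ^ 2) * (dd q1 * e2 s)))]
  simp_rw [F2_polar, dd_polar]
  rw [angle (fun r => (2 * π) * ∫ s in Ioi (0:ℝ), s * (psi (r ^ 2) (s ^ 2) * (e2 r * e2 s)))]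
  have key : ∀ r : ℝ, (fun s : ℝ => s * (psi (r ^ 2) (s ^ 2) * (e2 r * e2 s))) =
      fun s : ℝ => ((2 * π)⁻¹ * rexp (-r ^ 2 / 2) * (2 * π)⁻¹) *
        (s * rexp (-s ^ 2 / 2) * psi (r ^ 2) (s ^ 2)) := by
    intro r; funext s; unfold e2; ring
  simp_rw [key, integral_const_mul]
  have key2 : ∀ r : ℝ, r * ((2 * π) * ((2 * π)⁻¹ * rexp (-r ^ 2 / 2) * (2 * π)⁻¹ *
      ∫ s in Ioi (0:ℝ), s * rexp (-s ^ 2 / 2) * psi (r ^ 2) (s ^ 2))) =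
      (2 * π)⁻¹ * (r * rexp (-r ^ 2 / 2) *
      ∫ s in Ioi (0:ℝ), s * rexp (-s ^ 2 / 2) * psi (r ^ 2) (s ^ 2)) := by
    intro r
    have hπ : (2 * π) ≠ 0 := by positivity
    field_simp
  simp_rw [key2, integral_const_mul]
  rw [← mul_assoc, mul_inv_cancel₀ (by positivity : (2 * π) ≠ 0), one_mul]

/-! ### Step 3 : substitution s = r w -/

lemma step3 {r : ℝ} (hr : 0 < r) :
    (∫ s in Ioi (0:ℝ), s * rexp (-s ^ 2 / 2) * psi (r ^ 2) (s ^ 2)) =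
    ∫ w in Ioi (0:ℝ), r ^ 2 * (w * psi 1 (w ^ 2)) *
      rexp (-((1 + w ^ 2) / 2) * r ^ 2 + r ^ 2 / 2) := by
  have h := integral_comp_mul_left_Ioi
    (fun s => s * rexp (-s ^ 2 / 2) * psi (r ^ 2) (s ^ 2)) 0 hr
  rw [mul_zero] at h
  symm
  calc (∫ w in Ioi (0:ℝ), r ^ 2 * (w * psi 1 (w ^ 2)) *
        rexp (-((1 + w ^ 2) / 2) * r ^ 2 + r ^ 2 / 2))
      = ∫ w in Ioi (0:ℝ),
        r * (r * w * rexp (-(r * w) ^ 2 / 2) * psi (r ^ 2) ((r * w) ^ 2)) := by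
        refine setIntegral_congr_fun measurableSet_Ioi (fun w _ => ?_)
        have h1 : psi (r ^ 2) ((r * w) ^ 2) = psi 1 (w ^ 2) := by
          rw [show (r * w) ^ 2 = r ^ 2 * w ^ 2 by ring, show (r:ℝ) ^ 2 = r ^ 2 * 1 by ring]
          rw [show (r ^ 2 * 1 * (w ^ 2)) = r ^ 2 * w ^ 2 by ring]
          exact psi_smul (by positivity) 1 (w ^ 2)
        have h2 : rexp (-(r * w) ^ 2 / 2) = rexp (-((1 + w ^ 2) / 2) * r ^ 2 + r ^ 2 / 2) := by
          congr 1; ring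
        rw [h1, h2]; ring
    _ = r * ∫ w in Ioi (0:ℝ),
        r * w * rexp (-(r * w) ^ 2 / 2) * psi (r ^ 2) ((r * w) ^ 2) := integral_const_mul _ _
    _ = r * (r⁻¹ • ∫ s in Ioi (0:ℝ), s * rexp (-s ^ 2 / 2) * psi (r ^ 2) (s ^ 2)) := by rw [← h]
    _ = ∫ s in Ioi (0:ℝ), s * rexp (-s ^ 2 / 2) * psi (r ^ 2) (s ^ 2) := by
        rw [smul_eq_mul, ← mul_assoc, mul_inv_cancel₀ (ne_of_gt hr), one_mul]

/-! ### 1-d Gamma-type integrals -/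

lemma inner_r_integral {b : ℝ} (hb : 0 < b) :
    (∫ r in Ioi (0:ℝ), r ^ 3 * rexp (-b * r ^ 2)) = b⁻¹ ^ 2 / 2 := by
  have h := integral_rpow_mul_exp_neg_mul_rpow (p := 2) (q := 3) (b := b)
    (by norm_num) (by norm_num) hb
  rw [show ∫ r in Ioi (0:ℝ), r ^ 3 * rexp (-b * r ^ 2)
      = ∫ x in Ioi (0:ℝ), x ^ (3:ℝ) * rexp (-b * x ^ (2:ℝ)) from
    setIntegral_congr_fun measurableSet_Ioi (fun x _ => by
      rw [← Real.rpow_natCast x 3, ← Real.rpow_natCast x 2]; norm_num), h]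
  norm_num
  ring

lemma int_w_exp {b : ℝ} (hb : 0 < b) :
    (∫ w in Ioi (0:ℝ), w * rexp (-b * w ^ 2)) = (2 * b)⁻¹ := by
  have h := integral_rpow_mul_exp_neg_mul_rpow (p := 2) (q := 1) (b := b)
    (by norm_num) (by norm_num) hb
  rw [show ∫ w in Ioi (0:ℝ), w * rexp (-b * w ^ 2)
      = ∫ x in Ioi (0:ℝ), x ^ (1:ℝ) * rexp (-b * x ^ (2:ℝ)) from
    setIntegral_congr_fun measurableSet_Ioi (fun x _ => by
      rw [Real.rpow_one, ← Real.rpow_natCast x 2]; norm_num), h]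
  norm_num
  rw [Real.rpow_neg hb.le, Real.rpow_one]

/-! ### Integrability of h2 on the quadrant -/

lemma continuous_psi1 : Continuous (fun w : ℝ => psi 1 (w ^ 2)) := by
  unfold psi
  refine Continuous.div (by fun_prop) (by fun_prop) (fun w => by positivity)

lemma psi1_nonneg (w : ℝ) : 0 ≤ psi 1 (w ^ 2) := psi_nonneg (by positivity)

lemma psi1_le_one (w : ℝ) : psi 1 (w ^ 2) ≤ 1 := psi_le_one zero_le_one (sq_nonneg w)

lemma continuous_h2 : Continuous (Function.uncurry h2) := by
  unfold h2 Function.uncurry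
  exact ((continuous_fst.pow 3).mul
    (continuous_snd.mul (continuous_psi1.comp continuous_snd))).mul (by fun_prop)

lemma h2_bound {r w : ℝ} (hr : 0 < r) (hw : 0 < w) :
    ‖h2 r w‖ ≤ (r ^ 3 * rexp (-r ^ 2 / 2)) * (w * rexp (-(r ^ 2 / 2) * w ^ 2)) := by
  have hx : rexp (-((1 + w ^ 2) / 2) * r ^ 2)
      = rexp (-r ^ 2 / 2) * rexp (-(r ^ 2 / 2) * w ^ 2) := by
    rw [← Real.exp_add]; congr 1; ring
  have h0 : 0 ≤ h2 r w := by
    unfold h2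
    have := psi1_nonneg w
    positivity
  rw [Real.norm_eq_abs, abs_of_nonneg h0]
  unfold h2
  rw [hx]
  have h1 := psi1_le_one w
  have h2' := psi1_nonneg w
  have e1 : (0:ℝ) < rexp (-r ^ 2 / 2) := Real.exp_pos _
  have e2 : (0:ℝ) < rexp (-(r ^ 2 / 2) * w ^ 2) := Real.exp_pos _
  nlinarith [mul_pos (mul_pos (pow_pos hr 3) hw) (mul_pos e1 e2)]

lemma integrable_sec {r : ℝ} (hr : 0 < r) :
    Integrable (fun w => h2 r w) (volume.restrict (Ioi (0:ℝ))) := by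
  have hb : 0 < r ^ 2 / 2 := by positivity
  have hg : Integrable (fun w : ℝ => (r ^ 3 * rexp (-r ^ 2 / 2)) *
      (w * rexp (-(r ^ 2 / 2) * w ^ 2))) (volume.restrict (Ioi (0:ℝ))) :=
    ((integrable_mul_exp_neg_mul_sq hb).restrict).const_mul _
  refine hg.mono ((continuous_h2.comp (Continuous.prodMk_right r)).aestronglyMeasurable) ?_
  filter_upwards [ae_restrict_mem measurableSet_Ioi] with w hw
  have hbd := h2_bound hr hw
  refine hbd.trans (le_abs_self _)

lemma integrable_h2 : Integrable (Function.uncurry h2)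
    ((volume.restrict (Ioi (0:ℝ))).prod (volume.restrict (Ioi (0:ℝ)))) := by
  rw [integrable_prod_iff continuous_h2.aestronglyMeasurable]
  constructor
  · filter_upwards [ae_restrict_mem measurableSet_Ioi] with r hr
    exact integrable_sec hr
  · have hG : Integrable (fun r : ℝ => r * rexp (-(1/2 : ℝ) * r ^ 2))
        (volume.restrict (Ioi (0:ℝ))) := (integrable_mul_exp_neg_mul_sq (by norm_num)).restrict
    refine hG.mono ?_ ?_
    · exact (continuous_h2.aestronglyMeasurable.norm.integral_prod_right')
    · filter_upwards [ae_restrict_mem measurableSet_Ioi] with r hr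
      have hr' : (0:ℝ) < r := hr
      have hb : 0 < r ^ 2 / 2 := by positivity
      simp only [Function.uncurry_apply_pair]
      have hint : (∫ w in Ioi (0:ℝ), (r ^ 3 * rexp (-r ^ 2 / 2)) *
          (w * rexp (-(r ^ 2 / 2) * w ^ 2))) =
          (r ^ 3 * rexp (-r ^ 2 / 2)) * (2 * (r ^ 2 / 2))⁻¹ := by
        rw [integral_const_mul, int_w_exp hb]
      have hgint : Integrable (fun w : ℝ => (r ^ 3 * rexp (-r ^ 2 / 2)) *
          (w * rexp (-(r ^ 2 / 2) * w ^ 2))) (volume.restrict (Ioi (0:ℝ))) :=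
        ((integrable_mul_exp_neg_mul_sq hb).restrict).const_mul _
      have hmono : (∫ w in Ioi (0:ℝ), ‖h2 r w‖) ≤
          ∫ w in Ioi (0:ℝ), (r ^ 3 * rexp (-r ^ 2 / 2)) * (w * rexp (-(r ^ 2 / 2) * w ^ 2)) := by
        refine integral_mono_of_nonneg (ae_of_all _ fun w => norm_nonneg _) hgint ?_
        filter_upwards [ae_restrict_mem measurableSet_Ioi] with w hw
        exact h2_bound hr' hw
      have hnn : 0 ≤ ∫ w in Ioi (0:ℝ), ‖h2 r w‖ :=
        integral_nonneg fun w => norm_nonneg _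
      rw [Real.norm_eq_abs, abs_of_nonneg hnn]
      refine hmono.trans ?_
      rw [hint]
      have : r ^ 3 * rexp (-r ^ 2 / 2) * (2 * (r ^ 2 / 2))⁻¹ = r * rexp (-r ^ 2 / 2) := by
        field_simp
      rw [this, Real.norm_eq_abs]
      have : r * rexp (-(1/2:ℝ) * r ^ 2) = r * rexp (-r ^ 2 / 2) := by
        congr 2; ring
      rw [← this]
      exact le_abs_self _


/-! ### Final 1-d integral -/


lemma hasDeriv_F1 (w : ℝ) : HasDerivAt (fun w : ℝ => (1 + w ^ 2)⁻¹ - ((1 + w ^ 2) ^ 2)⁻¹)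
    (2 * w * (1 - w ^ 2) / (1 + w ^ 2) ^ 3) w := by
  have hne : (1 + w ^ 2) ≠ 0 := by positivity
  have hu : HasDerivAt (fun w : ℝ => 1 + w ^ 2) (2 * w) w := by
    simpa using (hasDerivAt_pow 2 w).const_add 1
  have h1 : HasDerivAt (fun w : ℝ => (1 + w ^ 2)⁻¹) (-(2 * w) / (1 + w ^ 2) ^ 2) w := hu.inv hne
  have h2 : HasDerivAt (fun w : ℝ => ((1 + w ^ 2) ^ 2)⁻¹)
      (-((2 : ℕ) * (1 + w ^ 2) ^ 1 * (2 * w)) / ((1 + w ^ 2) ^ 2) ^ 2) w :=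
    (hu.pow 2).inv (pow_ne_zero 2 hne)
  have := h1.sub h2
  refine this.congr_deriv ?_
  field_simp
  ring

lemma hasDeriv_F2 (w : ℝ) : HasDerivAt (fun w : ℝ => ((1 + w ^ 2) ^ 2)⁻¹ - (1 + w ^ 2)⁻¹)
    (2 * w * (w ^ 2 - 1) / (1 + w ^ 2) ^ 3) w := by
  have h := (hasDeriv_F1 w).neg
  have hf : (fun w : ℝ => ((1 + w ^ 2) ^ 2)⁻¹ - (1 + w ^ 2)⁻¹) =
      -fun w : ℝ => (1 + w ^ 2)⁻¹ - ((1 + w ^ 2) ^ 2)⁻¹ := by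
    funext v; simp only [Pi.neg_apply]; ring
  rw [hf]
  refine h.congr_deriv ?_
  ring

lemma tendsto_F2 : Tendsto (fun w : ℝ => ((1 + w ^ 2) ^ 2)⁻¹ - (1 + w ^ 2)⁻¹) atTop (nhds 0) := by
  have hu : Tendsto (fun w : ℝ => 1 + w ^ 2) atTop atTop :=
    tendsto_atTop_add_const_left _ 1 (tendsto_pow_atTop two_ne_zero)
  have h1 : Tendsto (fun w : ℝ => (1 + w ^ 2)⁻¹) atTop (nhds 0) := hu.inv_tendsto_atTop
  have h2 : Tendsto (fun w : ℝ => ((1 + w ^ 2) ^ 2)⁻¹) atTop (nhds 0) :=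
    ((tendsto_pow_atTop two_ne_zero).comp hu).inv_tendsto_atTop
  simpa using h2.sub h1

lemma final_w_integral :
    (∫ w in Ioi (0:ℝ), 2 * w * |1 - w ^ 2| / (1 + w ^ 2) ^ 3) = 1 / 2 := by
  have hsplit : Ioc (0:ℝ) 1 ∪ Ioi 1 = Ioi 0 := Ioc_union_Ioi_eq_Ioi zero_le_one
  -- piece 2 on Ioi 1
  have hcont2 : ContinuousWithinAt (fun w : ℝ => ((1 + w ^ 2) ^ 2)⁻¹ - (1 + w ^ 2)⁻¹) (Ici 1) 1 :=
    (hasDeriv_F2 1).continuousAt.continuousWithinAt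
  have hderiv2 : ∀ x ∈ Ioi (1:ℝ), HasDerivAt (fun w : ℝ => ((1 + w ^ 2) ^ 2)⁻¹ - (1 + w ^ 2)⁻¹)
      (2 * x * (x ^ 2 - 1) / (1 + x ^ 2) ^ 3) x := fun x _ => hasDeriv_F2 x
  have hnonneg2 : ∀ x ∈ Ioi (1:ℝ), 0 ≤ 2 * x * (x ^ 2 - 1) / (1 + x ^ 2) ^ 3 := by
    intro x hx
    have h1 : (1:ℝ) < x := hx
    have : (0:ℝ) ≤ x ^ 2 - 1 := by nlinarith
    positivity
  have hint2 : IntegrableOn (fun x : ℝ => 2 * x * (x ^ 2 - 1) / (1 + x ^ 2) ^ 3) (Ioi 1) :=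
    integrableOn_Ioi_deriv_of_nonneg hcont2 hderiv2 hnonneg2 tendsto_F2
  have hval2 : (∫ x in Ioi (1:ℝ), 2 * x * (x ^ 2 - 1) / (1 + x ^ 2) ^ 3) = 1 / 4 := by
    rw [integral_Ioi_of_hasDerivAt_of_nonneg hcont2 hderiv2 hnonneg2 tendsto_F2]
    norm_num
  -- piece 1 on Ioc 0 1
  have hcongr1 : EqOn (fun w : ℝ => 2 * w * |1 - w ^ 2| / (1 + w ^ 2) ^ 3)
      (fun w : ℝ => 2 * w * (1 - w ^ 2) / (1 + w ^ 2) ^ 3) (uIcc (0:ℝ) 1) := by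
    intro w hw
    rw [uIcc_of_le zero_le_one] at hw
    simp only
    rw [abs_of_nonneg (by nlinarith [hw.1, hw.2] : (0:ℝ) ≤ 1 - w ^ 2)]
  have hval1 : (∫ w in Ioc (0:ℝ) 1, 2 * w * |1 - w ^ 2| / (1 + w ^ 2) ^ 3) = 1 / 4 := by
    rw [← intervalIntegral.integral_of_le zero_le_one]
    rw [intervalIntegral.integral_congr hcongr1]
    rw [intervalIntegral.integral_eq_sub_of_hasDerivAt (fun x _ => hasDeriv_F1 x) ?hint]
    · norm_num
    case hint =>
      apply Continuous.intervalIntegrable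
      have : ∀ w : ℝ, (1 + w ^ 2) ^ 3 ≠ 0 := fun w => by positivity
      exact (continuous_const.mul continuous_id |>.mul
        (continuous_const.sub (continuous_pow 2))).div
        ((continuous_const.add (continuous_pow 2)).pow 3) this
  -- abs integrand integrable on Ioi 1
  have hcongr2 : EqOn (fun w : ℝ => 2 * w * |1 - w ^ 2| / (1 + w ^ 2) ^ 3)
      (fun w : ℝ => 2 * w * (w ^ 2 - 1) / (1 + w ^ 2) ^ 3) (Ioi 1) := by
    intro w hw
    have h1 : (1:ℝ) < w := hw
    simp only
    rw [abs_of_nonpos (by nlinarith : (1:ℝ) - w ^ 2 ≤ 0)]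
    ring
  have habs2 : (∫ w in Ioi (1:ℝ), 2 * w * |1 - w ^ 2| / (1 + w ^ 2) ^ 3) = 1 / 4 := by
    rw [setIntegral_congr_fun measurableSet_Ioi hcongr2, hval2]
  have hint2' : IntegrableOn (fun w : ℝ => 2 * w * |1 - w ^ 2| / (1 + w ^ 2) ^ 3) (Ioi 1) :=
    (integrableOn_congr_fun hcongr2 measurableSet_Ioi).2 hint2
  have hint1' : IntegrableOn (fun w : ℝ => 2 * w * |1 - w ^ 2| / (1 + w ^ 2) ^ 3) (Ioc 0 1) := by
    apply Continuous.integrableOn_Ioc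
    have : ∀ w : ℝ, (1 + w ^ 2) ^ 3 ≠ 0 := fun w => by positivity
    exact ((continuous_const.mul continuous_id |>.mul
      (continuous_const.sub (continuous_pow 2)).abs).div
      ((continuous_const.add (continuous_pow 2)).pow 3) this)
  rw [← hsplit, setIntegral_union (Ioc_disjoint_Ioi le_rfl) measurableSet_Ioi hint1' hint2',
    hval1, habs2]
  norm_num

end AUX

/-- For four independent standard Gaussians x₁,x₂,x₃,x₄,
E[ |x₁²+x₂²−x₃²−x₄²| / (x₁²+x₂²+x₃²+x₄²) ] = 1/2. -/
theorem stmt_2 :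
    (∫ x : Fin 4 → ℝ,
        |x 0 ^ 2 + x 1 ^ 2 - x 2 ^ 2 - x 3 ^ 2| / (x 0 ^ 2 + x 1 ^ 2 + x 2 ^ 2 + x 3 ^ 2)
        ∂(Measure.pi fun _ : Fin 4 => gaussianReal 0 1)) = 1 / 2 := by
  rw [step1, step2]
  have hcongr : ∀ r ∈ Ioi (0:ℝ), r * rexp (-r ^ 2 / 2) *
      (∫ s in Ioi (0:ℝ), s * rexp (-s ^ 2 / 2) * psi (r ^ 2) (s ^ 2)) =
      ∫ w in Ioi (0:ℝ), h2 r w := by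
    intro r hr
    rw [step3 hr, ← integral_const_mul]
    refine setIntegral_congr_fun measurableSet_Ioi (fun w _ => ?_)
    unfold h2
    rw [show r * rexp (-r ^ 2 / 2) * (r ^ 2 * (w * psi 1 (w ^ 2)) *
        rexp (-((1 + w ^ 2) / 2) * r ^ 2 + r ^ 2 / 2)) =
        r ^ 3 * (w * psi 1 (w ^ 2)) *
        (rexp (-r ^ 2 / 2) * rexp (-((1 + w ^ 2) / 2) * r ^ 2 + r ^ 2 / 2)) by ring,
      ← Real.exp_add]
    congr 2
    ring
  rw [setIntegral_congr_fun measurableSet_Ioi hcongr]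
  rw [integral_integral_swap integrable_h2]
  have hinner : ∀ w ∈ Ioi (0:ℝ), (∫ r in Ioi (0:ℝ), h2 r w) =
      2 * w * |1 - w ^ 2| / (1 + w ^ 2) ^ 3 := by
    intro w _
    have hb : 0 < (1 + w ^ 2) / 2 := by positivity
    calc (∫ r in Ioi (0:ℝ), h2 r w)
        = ∫ r in Ioi (0:ℝ), (w * psi 1 (w ^ 2)) *
            (r ^ 3 * rexp (-((1 + w ^ 2) / 2) * r ^ 2)) := by
          refine setIntegral_congr_fun measurableSet_Ioi (fun r _ => ?_)
          unfold h2; ring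
      _ = (w * psi 1 (w ^ 2)) *
            ∫ r in Ioi (0:ℝ), r ^ 3 * rexp (-((1 + w ^ 2) / 2) * r ^ 2) :=
          integral_const_mul _ _
      _ = (w * psi 1 (w ^ 2)) * (((1 + w ^ 2) / 2)⁻¹ ^ 2 / 2) := by
          rw [inner_r_integral hb]
      _ = 2 * w * |1 - w ^ 2| / (1 + w ^ 2) ^ 3 := by
          unfold psi
          have hne : (1:ℝ) + w ^ 2 ≠ 0 := by positivity
          field_simp
  rw [setIntegral_congr_fun measurableSet_Ioi hinner, final_w_integral]
end

section
/- For ρ_1, ρ_2 ranging over (0,∞), the double integral ∫_0^∞ ∫_0^∞ (|ρ_1^2 − ρ_2^2| / (ρ_1^2 + ρ_2^2)) · ρ_1 ρ_2 · e^{−(ρ_1^2+ρ_2^2)/2} dρ_1 dρ_2 = 1/2. -/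
open MeasureTheory Real Set

noncomputable def gg : ℝ × ℝ → ℝ := fun p =>
  (|p.1 ^ 2 - p.2 ^ 2| / (p.1 ^ 2 + p.2 ^ 2)) * (p.1 * p.2) * Real.exp (-(p.1 ^ 2 + p.2 ^ 2) / 2)

lemma gg_integrable : Integrable gg := by
  have hb : Integrable (fun p : ℝ × ℝ =>
      |p.1 * Real.exp (-(1/2) * p.1 ^ 2)| * |p.2 * Real.exp (-(1/2) * p.2 ^ 2)|) := by
    have h1 : Integrable (fun x : ℝ => |x * Real.exp (-(1/2) * x ^ 2)|) :=
      (integrable_mul_exp_neg_mul_sq (by norm_num : (0:ℝ) < 1/2)).abs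
    simpa [Measure.volume_eq_prod] using h1.mul_prod h1
  have hm : AEStronglyMeasurable gg volume := by
    apply Measurable.aestronglyMeasurable
    unfold gg
    fun_prop
  refine hb.mono' hm (Filter.Eventually.of_forall fun p => ?_)
  have h1 : |p.1 ^ 2 - p.2 ^ 2| / (p.1 ^ 2 + p.2 ^ 2) ≤ 1 := by
    rcases eq_or_ne (p.1 ^ 2 + p.2 ^ 2) 0 with h | h
    · simp [h]
    · rw [div_le_one (lt_of_le_of_ne (by positivity) (Ne.symm h))]
      rw [abs_sub_le_iff]
      constructor <;> nlinarith [sq_nonneg p.1, sq_nonneg p.2]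
  have h2 : (0:ℝ) ≤ |p.1 ^ 2 - p.2 ^ 2| / (p.1 ^ 2 + p.2 ^ 2) := by positivity
  calc ‖gg p‖ = (|p.1 ^ 2 - p.2 ^ 2| / (p.1 ^ 2 + p.2 ^ 2)) *
        (|p.1| * |p.2| * Real.exp (-(p.1 ^ 2 + p.2 ^ 2) / 2)) := by
        unfold gg
        rw [Real.norm_eq_abs, abs_mul, abs_mul, abs_of_nonneg h2, abs_mul,
          Real.abs_exp, mul_assoc]
    _ ≤ 1 * (|p.1| * |p.2| * Real.exp (-(p.1 ^ 2 + p.2 ^ 2) / 2)) := by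
        apply mul_le_mul_of_nonneg_right h1
        positivity
    _ = |p.1 * Real.exp (-(1/2) * p.1 ^ 2)| * |p.2 * Real.exp (-(1/2) * p.2 ^ 2)| := by
        rw [one_mul, abs_mul, abs_mul, Real.abs_exp, Real.abs_exp, mul_mul_mul_comm,
          ← Real.exp_add]
        congr 1
        ring

lemma r_integral : ∫ r in Ioi (0:ℝ), r ^ 3 * Real.exp (-r ^ 2 / 2) = 2 := by
  have h := integral_rpow_mul_exp_neg_mul_rpow (p := 2) (q := 3) (b := 1/2)
    (by norm_num) (by norm_num) (by norm_num)
  rw [show ((-(3 + 1) / 2) : ℝ) = -2 by norm_num, show ((3 + 1) / 2 : ℝ) = 2 by norm_num,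
    Real.Gamma_two] at h
  have e : ∫ x in Ioi (0:ℝ), x ^ (3:ℝ) * Real.exp (-(1/2) * x ^ (2:ℝ)) =
      ∫ r in Ioi (0:ℝ), r ^ 3 * Real.exp (-r ^ 2 / 2) := by
    refine setIntegral_congr_fun measurableSet_Ioi fun x hx => ?_
    have e3 : x ^ (3:ℝ) = x ^ (3:ℕ) := by
      rw [show ((3:ℝ) = ((3:ℕ):ℝ)) by norm_num, Real.rpow_natCast]
    have e2 : x ^ (2:ℝ) = x ^ (2:ℕ) := by
      rw [show ((2:ℝ) = ((2:ℕ):ℝ)) by norm_num, Real.rpow_natCast]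
    rw [e3, e2]
    ring_nf
  rw [e] at h
  rw [h, show ((-2:ℝ) = ((-2:ℤ):ℝ)) by norm_num, Real.rpow_intCast]
  norm_num

lemma theta_integral :
    ∫ θ in Ioo (0:ℝ) (π/2), |Real.cos (2*θ)| * (Real.sin θ * Real.cos θ) = 1/4 := by
  have hpi : (0:ℝ) < π := Real.pi_pos
  have hcont : ∀ a b : ℝ, IntervalIntegrable
      (fun θ => |Real.cos (2*θ)| * (Real.sin θ * Real.cos θ)) volume a b := by
    intro a b
    apply Continuous.intervalIntegrable
    exact ((Real.continuous_cos.comp (continuous_const.mul continuous_id)).abs).mul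
      (Real.continuous_sin.mul Real.continuous_cos)
  have hIoo : ∫ θ in Ioo (0:ℝ) (π/2), |Real.cos (2*θ)| * (Real.sin θ * Real.cos θ)
      = ∫ θ in (0:ℝ)..(π/2), |Real.cos (2*θ)| * (Real.sin θ * Real.cos θ) := by
    rw [intervalIntegral.integral_of_le (by positivity), integral_Ioc_eq_integral_Ioo]
  have hsplit := intervalIntegral.integral_add_adjacent_intervals (a := (0:ℝ)) (b := π/4)
    (c := π/2) (hcont 0 (π/4)) (hcont (π/4) (π/2))
  have hpiece1 : ∫ θ in (0:ℝ)..(π/4), |Real.cos (2*θ)| * (Real.sin θ * Real.cos θ) = 1/8 := by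
    have hcongr : ∀ θ ∈ uIcc (0:ℝ) (π/4),
        |Real.cos (2*θ)| * (Real.sin θ * Real.cos θ) = Real.sin (4*θ) / 4 := by
      intro θ hθ
      rw [uIcc_of_le (by positivity)] at hθ
      have h1 : 0 ≤ Real.cos (2*θ) := by
        apply Real.cos_nonneg_of_mem_Icc
        constructor <;> [linarith [hθ.1]; linarith [hθ.2]]
      rw [abs_of_nonneg h1, show (4:ℝ)*θ = 2*(2*θ) by ring, Real.sin_two_mul,
        Real.sin_two_mul]
      ring
    rw [intervalIntegral.integral_congr hcongr, intervalIntegral.integral_div,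
      intervalIntegral.integral_comp_mul_left Real.sin (by norm_num : (4:ℝ) ≠ 0),
      show (4:ℝ)*(π/4) = π by ring, integral_sin, mul_zero, Real.cos_pi, Real.cos_zero]
    norm_num
  have hpiece2 : ∫ θ in (π/4:ℝ)..(π/2), |Real.cos (2*θ)| * (Real.sin θ * Real.cos θ)
      = 1/8 := by
    have hcongr : ∀ θ ∈ uIcc (π/4:ℝ) (π/2),
        |Real.cos (2*θ)| * (Real.sin θ * Real.cos θ) = -(Real.sin (4*θ) / 4) := by
      intro θ hθ
      rw [uIcc_of_le (by linarith)] at hθ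
      have h1 : Real.cos (2*θ) ≤ 0 := by
        apply Real.cos_nonpos_of_pi_div_two_le_of_le
        · linarith [hθ.1]
        · linarith [hθ.2]
      rw [abs_of_nonpos h1, show (4:ℝ)*θ = 2*(2*θ) by ring, Real.sin_two_mul,
        Real.sin_two_mul]
      ring
    rw [intervalIntegral.integral_congr hcongr, intervalIntegral.integral_neg,
      intervalIntegral.integral_div,
      intervalIntegral.integral_comp_mul_left Real.sin (by norm_num : (4:ℝ) ≠ 0),
      show (4:ℝ)*(π/2) = 2*π by ring, show (4:ℝ)*(π/4) = π by ring, integral_sin,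
      Real.cos_pi, Real.cos_two_pi]
    norm_num
  rw [hIoo, ← hsplit, hpiece1, hpiece2]
  norm_num

/-- The polar-coordinates double integral from the proof of Lemma `random`:
∫₀^∞ ∫₀^∞ (|ρ₁²−ρ₂²|/(ρ₁²+ρ₂²))·ρ₁ρ₂·e^{−(ρ₁²+ρ₂²)/2} dρ₁ dρ₂ = 1/2. -/
theorem stmt_3 :
    (∫ ρ₂ in Set.Ioi (0 : ℝ), ∫ ρ₁ in Set.Ioi (0 : ℝ),
        (|ρ₁ ^ 2 - ρ₂ ^ 2| / (ρ₁ ^ 2 + ρ₂ ^ 2)) * (ρ₁ * ρ₂) *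
          Real.exp (-(ρ₁ ^ 2 + ρ₂ ^ 2) / 2)) = 1 / 2 := by
  have hQ : MeasurableSet (Ioi (0:ℝ) ×ˢ Ioi (0:ℝ)) :=
    measurableSet_Ioi.prod measurableSet_Ioi
  have step1 : (∫ ρ₂ in Set.Ioi (0 : ℝ), ∫ ρ₁ in Set.Ioi (0 : ℝ),
        (|ρ₁ ^ 2 - ρ₂ ^ 2| / (ρ₁ ^ 2 + ρ₂ ^ 2)) * (ρ₁ * ρ₂) *
          Real.exp (-(ρ₁ ^ 2 + ρ₂ ^ 2) / 2))
      = ∫ p in Ioi (0:ℝ) ×ˢ Ioi (0:ℝ), gg p := by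
    rw [Measure.volume_eq_prod, setIntegral_prod gg
      (by rw [← Measure.volume_eq_prod]; exact gg_integrable.integrableOn)]
    refine setIntegral_congr_fun measurableSet_Ioi fun x _ => ?_
    refine setIntegral_congr_fun measurableSet_Ioi fun y _ => ?_
    unfold gg
    simp only
    rw [abs_sub_comm]
    ring_nf
  rw [step1, ← integral_indicator hQ, ← integral_comp_polarCoord_symm]
  have step2 : ∀ p ∈ polarCoord.target,
      p.1 • ((Ioi (0:ℝ) ×ˢ Ioi (0:ℝ)).indicator gg (polarCoord.symm p))
      = (Ioi (0:ℝ) ×ˢ Ioo (0:ℝ) (π/2)).indicator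
          (fun q => (q.1 ^ 3 * Real.exp (-q.1 ^ 2 / 2)) *
            (|Real.cos (2*q.2)| * (Real.sin q.2 * Real.cos q.2))) p := by
    rintro ⟨r, θ⟩ hp
    rw [polarCoord_target] at hp
    obtain ⟨hr, hθ⟩ := hp
    simp only [mem_Ioi] at hr
    simp only [mem_Ioo] at hθ
    by_cases hθ' : θ ∈ Ioo (0:ℝ) (π/2)
    · have hsin : 0 < Real.sin θ :=
        Real.sin_pos_of_pos_of_lt_pi hθ'.1 (by linarith [Real.pi_pos, hθ'.2])
      have hcos : 0 < Real.cos θ :=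
        Real.cos_pos_of_mem_Ioo ⟨by linarith [Real.pi_pos, hθ'.1], hθ'.2⟩
      have hmem : polarCoord.symm (r, θ) ∈ Ioi (0:ℝ) ×ˢ Ioi (0:ℝ) := by
        rw [polarCoord_symm_apply]
        exact ⟨mul_pos hr hcos, mul_pos hr hsin⟩
      rw [indicator_of_mem hmem, indicator_of_mem (by exact ⟨hr, hθ'⟩),
        polarCoord_symm_apply]
      unfold gg
      simp only
      have e1 : (r * Real.cos θ) ^ 2 + (r * Real.sin θ) ^ 2 = r ^ 2 := by
        rw [mul_pow, mul_pow, ← mul_add, Real.cos_sq_add_sin_sq, mul_one]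
      have e2 : |(r * Real.cos θ) ^ 2 - (r * Real.sin θ) ^ 2|
          = r ^ 2 * |Real.cos (2*θ)| := by
        rw [mul_pow, mul_pow, ← mul_sub, abs_mul, abs_of_nonneg (sq_nonneg r),
          ← Real.cos_two_mul']
      rw [e1, e2, smul_eq_mul, mul_div_cancel_left₀ _ (by positivity : (r:ℝ)^2 ≠ 0)]
      ring
    · have hnot : polarCoord.symm (r, θ) ∉ Ioi (0:ℝ) ×ˢ Ioi (0:ℝ) := by
        rw [polarCoord_symm_apply]
        intro hmem
        obtain ⟨h1, h2⟩ := hmem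
        simp only [mem_Ioi] at h1 h2
        simp only [mem_Ioo, not_and, not_lt] at hθ'
        rcases le_or_gt θ 0 with h | h
        · have : Real.sin θ ≤ 0 :=
            Real.sin_nonpos_of_nonpos_of_neg_pi_le h (by linarith [hθ.1])
          nlinarith
        · have : Real.cos θ ≤ 0 := by
            apply Real.cos_nonpos_of_pi_div_two_le_of_le (hθ' h)
            linarith [hθ.2, Real.pi_pos]
          nlinarith
      have hnot2 : ((r, θ) : ℝ × ℝ) ∉ Ioi (0:ℝ) ×ˢ Ioo (0:ℝ) (π/2) := by
        intro hmem
        exact hθ' hmem.2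
      rw [indicator_of_notMem hnot, indicator_of_notMem hnot2, smul_zero]
  rw [setIntegral_congr_fun polarCoord.open_target.measurableSet step2,
    setIntegral_indicator (measurableSet_Ioi.prod measurableSet_Ioo)]
  have hsub : polarCoord.target ∩ (Ioi (0:ℝ) ×ˢ Ioo (0:ℝ) (π/2))
      = Ioi (0:ℝ) ×ˢ Ioo (0:ℝ) (π/2) := by
    rw [polarCoord_target]
    apply inter_eq_self_of_subset_right
    apply prod_mono_right
    apply Ioo_subset_Ioo <;> linarith [Real.pi_pos]
  have key : (∫ (x : ℝ × ℝ) in Ioi (0:ℝ) ×ˢ Ioo (0:ℝ) (π/2),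
      x.1 ^ 3 * Real.exp (-x.1 ^ 2 / 2) * (|Real.cos (2*x.2)| * (Real.sin x.2 * Real.cos x.2))
        ∂((volume : Measure ℝ).prod volume))
      = (∫ r in Ioi (0:ℝ), r ^ 3 * Real.exp (-r ^ 2 / 2)) *
        (∫ θ in Ioo (0:ℝ) (π/2), |Real.cos (2*θ)| * (Real.sin θ * Real.cos θ)) :=
    setIntegral_prod_mul (fun r : ℝ => r ^ 3 * Real.exp (-r ^ 2 / 2))
      (fun θ : ℝ => |Real.cos (2*θ)| * (Real.sin θ * Real.cos θ)) _ _
  rw [hsub, Measure.volume_eq_prod ℝ ℝ, key, r_integral, theta_integral]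
  norm_num
end
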